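/- Let π be an ε-almost representation of (Γ,S), and define D: C¹ → C² by Df((s₁,s₂)) = f(s₁) − f(s₂). Then for every f ∈ C¹: |⟨Df, Df⟩_{C²} − (1/3)⟨d₂f, d₂f⟩_{C²} − ⟨f,f⟩_{C¹}| ≤ (10/3) ε ⟨f,f⟩_{C¹}. -/

import Mathlib

open Finset ContinuousLinearMap

def edgeSet {G : Type*} [Group G] [DecidableEq G] (S : Finset G) : Finset (G × G) :=
  (S ×ˢ S).filter fun p => p.1⁻¹ * p.2 ∈ S

def deg {G : Type*} [Group G] [DecidableEq G] (S : Finset G) (s : G) : ℕ :=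
  (S.filter fun s' => s⁻¹ * s' ∈ S).card

def IsAlmostRep {G : Type*} [Group G] {H : Type*} [NormedAddCommGroup H]
    [InnerProductSpace ℂ H] [CompleteSpace H]
    (S : Finset G) (ε : ℝ) (π : G → H →L[ℂ] H) : Prop :=
  (∀ s ∈ S, π s ∈ unitary (H →L[ℂ] H)) ∧
  (∀ s ∈ S, π s⁻¹ = star (π s)) ∧
  ∀ s₁ ∈ S, ∀ s₂ ∈ S, s₁ * s₂ ∈ S → ‖π (s₁ * s₂) - (π s₁).comp (π s₂)‖ ≤ ε

/-- `d₂ f ((s,s')) = f(s) − f(s') + π(s) f(s⁻¹s')`. -/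
def d2 {G : Type*} [Group G] {H : Type*} [NormedAddCommGroup H] [InnerProductSpace ℂ H]
    (π : G → H →L[ℂ] H) (f : G → H) (p : G × G) : H :=
  f p.1 - f p.2 + π p.1 (f (p.1⁻¹ * p.2))

/-!
Expanding the squares, and turning every sum over edges into a `deg`-weighted sum over `S` by
means of the symmetries `(a, b) ↦ (b, a)` and `(a, b) ↦ (a⁻¹, a⁻¹ b)` of the edge set, the
quantity inside the absolute value becomes
`(2/3) ∑_{(a,b)} Re ⟪f b, π a f(a⁻¹ b) + π b f(b⁻¹ a)⟫`.
For a genuine representation the condition `f s⁻¹ = -π(s⁻¹) f s` makes every summand vanish;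
for an `ε`-almost representation each is at most `ε ‖f b‖ ‖f(b⁻¹ a)‖`, and AM–GM bounds the
sum by `(2/3) ε ⟨f, f⟩`.
-/

open scoped InnerProductSpace

section EdgeSums

variable {G : Type*} [Group G] [DecidableEq G] {S : Finset G}

lemma mem_edgeSet {p : G × G} : p ∈ edgeSet S ↔ p.1 ∈ S ∧ p.2 ∈ S ∧ p.1⁻¹ * p.2 ∈ S := by
  simp [edgeSet, and_assoc]

lemma swap_mem_edgeSet (hsym : ∀ s ∈ S, s⁻¹ ∈ S) {p : G × G} (hp : p ∈ edgeSet S) :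
    p.swap ∈ edgeSet S := by
  obtain ⟨h₁, h₂, h₁₂⟩ := mem_edgeSet.mp hp
  exact mem_edgeSet.mpr ⟨h₂, h₁, by simpa using hsym _ h₁₂⟩

lemma inv_fst_mem_edgeSet (hsym : ∀ s ∈ S, s⁻¹ ∈ S) {p : G × G} (hp : p ∈ edgeSet S) :
    (p.1⁻¹, p.1⁻¹ * p.2) ∈ edgeSet S := by
  obtain ⟨h₁, h₂, h₁₂⟩ := mem_edgeSet.mp hp
  exact mem_edgeSet.mpr ⟨hsym _ h₁, h₁₂, by simpa using h₂⟩

lemma sum_comp_of_involutive {α M : Type*} [AddCommMonoid M] {s : Finset α} {σ : α → α}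
    (hσ : Function.Involutive σ) (hs : ∀ a ∈ s, σ a ∈ s) (h : α → M) :
    ∑ a ∈ s, h (σ a) = ∑ a ∈ s, h a :=
  Finset.sum_nbij' σ σ hs hs (fun a _ => hσ a) (fun a _ => hσ a) (fun _ _ => rfl)

lemma sum_edgeSet_swap (hsym : ∀ s ∈ S, s⁻¹ ∈ S) {M : Type*} [AddCommMonoid M]
    (h : G × G → M) : ∑ p ∈ edgeSet S, h p.swap = ∑ p ∈ edgeSet S, h p :=
  sum_comp_of_involutive Prod.swap_swap (fun _ => swap_mem_edgeSet hsym) h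

/-- Translating the triangle `(1, a, b)` by `a⁻¹` permutes the edges. -/
lemma sum_edgeSet_inv_fst (hsym : ∀ s ∈ S, s⁻¹ ∈ S) {M : Type*} [AddCommMonoid M]
    (h : G × G → M) : ∑ p ∈ edgeSet S, h (p.1⁻¹, p.1⁻¹ * p.2) = ∑ p ∈ edgeSet S, h p :=
  sum_comp_of_involutive (fun p => by simp) (fun _ => inv_fst_mem_edgeSet hsym) h

lemma sum_edgeSet_fst (g : G → ℝ) :
    ∑ p ∈ edgeSet S, g p.1 = ∑ s ∈ S, (deg S s : ℝ) * g s := by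
  rw [edgeSet, Finset.sum_filter, Finset.sum_product]
  refine Finset.sum_congr rfl fun s _ => ?_
  rw [← Finset.sum_filter]
  simp [deg]

lemma sum_edgeSet_snd (hsym : ∀ s ∈ S, s⁻¹ ∈ S) (g : G → ℝ) :
    ∑ p ∈ edgeSet S, g p.2 = ∑ s ∈ S, (deg S s : ℝ) * g s := by
  rw [← sum_edgeSet_fst, ← sum_edgeSet_swap hsym (fun p => g p.2)]
  rfl

lemma sum_edgeSet_inv_fst_mul_snd (hsym : ∀ s ∈ S, s⁻¹ ∈ S) (g : G → ℝ) :
    ∑ p ∈ edgeSet S, g (p.1⁻¹ * p.2) = ∑ s ∈ S, (deg S s : ℝ) * g s := by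
  rw [← sum_edgeSet_snd hsym, ← sum_edgeSet_inv_fst hsym (fun p => g p.2)]

lemma sum_edgeSet_inv_snd_mul_fst (hsym : ∀ s ∈ S, s⁻¹ ∈ S) (g : G → ℝ) :
    ∑ p ∈ edgeSet S, g (p.2⁻¹ * p.1) = ∑ s ∈ S, (deg S s : ℝ) * g s := by
  rw [← sum_edgeSet_inv_fst_mul_snd hsym, ← sum_edgeSet_swap hsym (fun p => g (p.1⁻¹ * p.2))]
  rfl

lemma sum_edgeSet_norm_sub_sq {H : Type*} [NormedAddCommGroup H] [InnerProductSpace ℂ H]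
    (hsym : ∀ s ∈ S, s⁻¹ ∈ S) (f : G → H) :
    ∑ p ∈ edgeSet S, ‖f p.1 - f p.2‖ ^ 2
      = 2 * ∑ s ∈ S, (deg S s : ℝ) * ‖f s‖ ^ 2
        - 2 * ∑ p ∈ edgeSet S, RCLike.re ⟪f p.1, f p.2⟫_ℂ := by
  simp only [norm_sub_sq (𝕜 := ℂ), Finset.sum_add_distrib, Finset.sum_sub_distrib,
    ← Finset.mul_sum, sum_edgeSet_fst (fun s => ‖f s‖ ^ 2),
    sum_edgeSet_snd hsym (fun s => ‖f s‖ ^ 2)]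
  ring

end EdgeSums

namespace IsAlmostRep

variable {G : Type*} [Group G] {H : Type*} [NormedAddCommGroup H] [InnerProductSpace ℂ H]
  [CompleteSpace H] {S : Finset G} {ε : ℝ} {π : G → H →L[ℂ] H} {s : G}

lemma norm_apply (hπ : IsAlmostRep S ε π) (hs : s ∈ S) (x : H) : ‖π s x‖ = ‖x‖ :=
  norm_map_of_mem_unitary (hπ.1 s hs) x

lemma apply_apply_inv (hπ : IsAlmostRep S ε π) (hs : s ∈ S) (x : H) : π s (π s⁻¹ x) = x := by
  rw [hπ.2.1 s hs]
  exact DFunLike.congr_fun (Unitary.mul_star_self_of_mem (hπ.1 s hs)) x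

lemma inner_apply (hπ : IsAlmostRep S ε π) (hs : s ∈ S) (x y : H) :
    ⟪x, π s y⟫_ℂ = ⟪π s⁻¹ x, y⟫_ℂ := by
  rw [hπ.2.1 s hs, star_eq_adjoint, adjoint_inner_left]

variable {f : G → H}

lemma apply_inv_eq_neg (hπ : IsAlmostRep S ε π) (hf : ∀ s ∈ S, f s⁻¹ = -(π s⁻¹ (f s)))
    (hs : s ∈ S) : π s (f s⁻¹) = -f s := by
  rw [hf s hs, map_neg, hπ.apply_apply_inv hs]

lemma inner_apply_eq_neg (hπ : IsAlmostRep S ε π) (hf : ∀ s ∈ S, f s⁻¹ = -(π s⁻¹ (f s)))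
    (hs : s ∈ S) (x : H) : ⟪f s, π s x⟫_ℂ = -⟪f s⁻¹, x⟫_ℂ := by
  rw [hπ.inner_apply hs, hf s hs, inner_neg_left, neg_neg]

/-- `π a f(t) + π(at) f(t⁻¹) = (π(at) − π a π t) f(t⁻¹)`, because `π t f(t⁻¹) = -f t`. -/
lemma norm_apply_add_apply_le (hπ : IsAlmostRep S ε π) (hf : ∀ s ∈ S, f s⁻¹ = -(π s⁻¹ (f s)))
    {a t : G} (ha : a ∈ S) (ht : t ∈ S) (hat : a * t ∈ S) :
    ‖π a (f t) + π (a * t) (f t⁻¹)‖ ≤ ε * ‖f t⁻¹‖ := by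
  have hdefect : π a (f t) + π (a * t) (f t⁻¹) = (π (a * t) - (π a).comp (π t)) (f t⁻¹) := by
    rw [sub_apply, comp_apply, hπ.apply_inv_eq_neg hf ht, map_neg]
    abel
  rw [hdefect]
  exact (le_opNorm _ _).trans
    (mul_le_mul_of_nonneg_right (hπ.2.2 a ha t ht hat) (norm_nonneg _))

end IsAlmostRep

section EdgeEnergies

variable {G : Type*} [Group G] [DecidableEq G] {H : Type*} [NormedAddCommGroup H]
  [InnerProductSpace ℂ H] [CompleteSpace H] {S : Finset G} {ε : ℝ} {π : G → H →L[ℂ] H}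
  {f : G → H}

lemma sum_edgeSet_re_inner_apply_fst (hsym : ∀ s ∈ S, s⁻¹ ∈ S) (hπ : IsAlmostRep S ε π)
    (hf : ∀ s ∈ S, f s⁻¹ = -(π s⁻¹ (f s))) :
    ∑ p ∈ edgeSet S, RCLike.re ⟪f p.1, π p.1 (f (p.1⁻¹ * p.2))⟫_ℂ
      = -∑ p ∈ edgeSet S, RCLike.re ⟪f p.1, f p.2⟫_ℂ := by
  rw [← sum_edgeSet_inv_fst hsym (fun q => RCLike.re ⟪f q.1, f q.2⟫_ℂ),
    ← Finset.sum_neg_distrib]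
  refine Finset.sum_congr rfl fun p hp => ?_
  rw [hπ.inner_apply_eq_neg hf (mem_edgeSet.mp hp).1, map_neg]

lemma sum_edgeSet_norm_d2_sq (hsym : ∀ s ∈ S, s⁻¹ ∈ S) (hπ : IsAlmostRep S ε π)
    (hf : ∀ s ∈ S, f s⁻¹ = -(π s⁻¹ (f s))) :
    ∑ p ∈ edgeSet S, ‖d2 π f p‖ ^ 2
      = ∑ p ∈ edgeSet S, ‖f p.1 - f p.2‖ ^ 2 + ∑ s ∈ S, (deg S s : ℝ) * ‖f s‖ ^ 2
        - 2 * ∑ p ∈ edgeSet S, RCLike.re ⟪f p.1, f p.2⟫_ℂ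
        - 2 * ∑ p ∈ edgeSet S, RCLike.re ⟪f p.2, π p.1 (f (p.1⁻¹ * p.2))⟫_ℂ := by
  have hterm : ∀ p ∈ edgeSet S, ‖d2 π f p‖ ^ 2
      = ‖f p.1 - f p.2‖ ^ 2 + ‖f (p.1⁻¹ * p.2)‖ ^ 2
        + 2 * RCLike.re ⟪f p.1, π p.1 (f (p.1⁻¹ * p.2))⟫_ℂ
        - 2 * RCLike.re ⟪f p.2, π p.1 (f (p.1⁻¹ * p.2))⟫_ℂ := fun p hp => by
    rw [d2, norm_add_sq (𝕜 := ℂ), hπ.norm_apply (mem_edgeSet.mp hp).1, inner_sub_left, map_sub]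
    ring
  rw [Finset.sum_congr rfl hterm]
  simp only [Finset.sum_add_distrib, Finset.sum_sub_distrib, ← Finset.mul_sum,
    sum_edgeSet_inv_fst_mul_snd hsym (fun s => ‖f s‖ ^ 2),
    sum_edgeSet_re_inner_apply_fst hsym hπ hf]
  ring

lemma abs_sum_edgeSet_re_inner_sub_le (hsym : ∀ s ∈ S, s⁻¹ ∈ S) (hε : 0 ≤ ε)
    (hπ : IsAlmostRep S ε π) (hf : ∀ s ∈ S, f s⁻¹ = -(π s⁻¹ (f s))) :
    |∑ p ∈ edgeSet S, RCLike.re ⟪f p.2, π p.1 (f (p.1⁻¹ * p.2))⟫_ℂ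
        - ∑ p ∈ edgeSet S, RCLike.re ⟪f p.1, f p.2⟫_ℂ|
      ≤ ε * ∑ s ∈ S, (deg S s : ℝ) * ‖f s‖ ^ 2 := by
  have hswap : -∑ p ∈ edgeSet S, RCLike.re ⟪f p.1, f p.2⟫_ℂ
      = ∑ p ∈ edgeSet S, RCLike.re ⟪f p.2, π p.2 (f (p.2⁻¹ * p.1))⟫_ℂ := by
    rw [← sum_edgeSet_re_inner_apply_fst hsym hπ hf, ← sum_edgeSet_swap hsym]
    rfl
  have hedge : ∀ p ∈ edgeSet S,
      |RCLike.re ⟪f p.2, π p.1 (f (p.1⁻¹ * p.2)) + π p.2 (f (p.2⁻¹ * p.1))⟫_ℂ|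
        ≤ ε * ((‖f p.2‖ ^ 2 + ‖f (p.2⁻¹ * p.1)‖ ^ 2) / 2) := fun p hp => by
    obtain ⟨h₁, h₂, h₁₂⟩ := mem_edgeSet.mp hp
    have hdefect := hπ.norm_apply_add_apply_le hf h₁ h₁₂ (by simpa using h₂)
    simp only [mul_inv_rev, inv_inv, mul_inv_cancel_left] at hdefect
    calc _ ≤ ‖f p.2‖ * ‖π p.1 (f (p.1⁻¹ * p.2)) + π p.2 (f (p.2⁻¹ * p.1))‖ :=
          (RCLike.abs_re_le_norm _).trans (norm_inner_le_norm _ _)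
      _ ≤ ‖f p.2‖ * (ε * ‖f (p.2⁻¹ * p.1)‖) := by gcongr
      _ ≤ ε * ((‖f p.2‖ ^ 2 + ‖f (p.2⁻¹ * p.1)‖ ^ 2) / 2) := by
          nlinarith [mul_nonneg hε (sq_nonneg (‖f p.2‖ - ‖f (p.2⁻¹ * p.1)‖))]
  calc _ = |∑ p ∈ edgeSet S,
          RCLike.re ⟪f p.2, π p.1 (f (p.1⁻¹ * p.2)) + π p.2 (f (p.2⁻¹ * p.1))⟫_ℂ| := by
        simp only [sub_eq_add_neg, hswap, inner_add_right, map_add, Finset.sum_add_distrib]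
    _ ≤ ∑ p ∈ edgeSet S, ε * ((‖f p.2‖ ^ 2 + ‖f (p.2⁻¹ * p.1)‖ ^ 2) / 2) :=
        (Finset.abs_sum_le_sum_abs _ _).trans (Finset.sum_le_sum hedge)
    _ = ε * ∑ s ∈ S, (deg S s : ℝ) * ‖f s‖ ^ 2 := by
        rw [← Finset.mul_sum, ← Finset.sum_div, Finset.sum_add_distrib,
          sum_edgeSet_snd hsym (fun s => ‖f s‖ ^ 2),
          sum_edgeSet_inv_snd_mul_fst hsym (fun s => ‖f s‖ ^ 2)]
        ring

end EdgeEnergies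

theorem stmt9_general {G : Type*} [Group G] [DecidableEq G]
    {H : Type*} [NormedAddCommGroup H] [InnerProductSpace ℂ H] [CompleteSpace H]
    (S : Finset G) (hsym : ∀ s ∈ S, s⁻¹ ∈ S)
    (ε : ℝ) (hε : 0 ≤ ε) (π : G → H →L[ℂ] H) (hπ : IsAlmostRep S ε π)
    (f : G → H) (hf : ∀ s ∈ S, f s⁻¹ = -(π s⁻¹ (f s))) :
    |∑ p ∈ edgeSet S, ‖f p.1 - f p.2‖ ^ 2
        - (1 / 3) * ∑ p ∈ edgeSet S, ‖d2 π f p‖ ^ 2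
        - ∑ s ∈ S, (deg S s : ℝ) * ‖f s‖ ^ 2|
      ≤ (10 / 3) * ε * ∑ s ∈ S, (deg S s : ℝ) * ‖f s‖ ^ 2 := by
  have hQ : 0 ≤ ∑ s ∈ S, (deg S s : ℝ) * ‖f s‖ ^ 2 := by positivity
  rw [sum_edgeSet_norm_d2_sq hsym hπ hf, sum_edgeSet_norm_sub_sq hsym f]
  have hbound := abs_sum_edgeSet_re_inner_sub_le hsym hε hπ hf
  rw [abs_le] at hbound ⊢
  constructor <;> linarith [mul_nonneg hε hQ]

/-- `|⟨Df, Df⟩_{C²} − (1/3)⟨d₂f, d₂f⟩_{C²} − ⟨f,f⟩_{C¹}| ≤ (10/3) ε ⟨f,f⟩_{C¹}`,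
where `Df((s₁,s₂)) = f(s₁) − f(s₂)`. -/
theorem stmt9 {G : Type*} [Group G] [DecidableEq G]
    {H : Type*} [NormedAddCommGroup H] [InnerProductSpace ℂ H] [CompleteSpace H]
    (S : Finset G) (hsym : ∀ s ∈ S, s⁻¹ ∈ S) (hone : (1 : G) ∉ S)
    (ε : ℝ) (hε : 0 ≤ ε) (π : G → H →L[ℂ] H) (hπ : IsAlmostRep S ε π)
    (f : G → H) (hf : ∀ s ∈ S, f s⁻¹ = -(π s⁻¹ (f s))) :
    |∑ p ∈ edgeSet S, ‖f p.1 - f p.2‖ ^ 2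
        - (1 / 3) * ∑ p ∈ edgeSet S, ‖d2 π f p‖ ^ 2
        - ∑ s ∈ S, (deg S s : ℝ) * ‖f s‖ ^ 2|
      ≤ (10 / 3) * ε * ∑ s ∈ S, (deg S s : ℝ) * ‖f s‖ ^ 2 :=
  stmt9_general S hsym ε hε π hπ f hf
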